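/- arXiv:2505.08609 — 6 statements merged into one kernel-verified Lean document; each statement's English description precedes it below -/
import Mathlib

section
/- Let ψ be a numerical polarization on X of characteristic χ, i.e. an additive function ψ from subcurves of X to ℝ with ψ_X = χ ∈ ℤ (additive means ψ_{Y₁ ∪ Y₂} = ψ_{Y₁} + ψ_{Y₂} whenever Y₁ and Y₂ share no irreducible component). Then the function s(ψ) : BCon(X) → ℤ defined by s(ψ)_Y = ⌈ψ_Y⌉ is a V-stability condition of characteristic χ on X, and its degeneracy set is D(s(ψ)) = {Y ∈ BCon(X) : ψ_Y ∈ ℤ}. -/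
open Finset

variable {ι : Type*} [Fintype ι] [DecidableEq ι]

/-- A subcurve `Y` of the curve (modeled by its finite set of irreducible components with a
connectivity predicate `conn`) is *biconnected* if both `Y` and its complement are nonempty
and connected. -/
def BCon (conn : Finset ι → Prop) (Y : Finset ι) : Prop :=
  Y.Nonempty ∧ Yᶜ.Nonempty ∧ conn Y ∧ conn Yᶜ

/-- `Y` is `s`-degenerate (for characteristic `χ`): `s Y + s Yᶜ - χ = 0`. -/
def Degen (s : Finset ι → ℤ) (χ : ℤ) (Y : Finset ι) : Prop :=
  s Y + s Yᶜ = χ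

/-- A V-stability condition of characteristic `χ`. -/
structure IsVStab (conn : Finset ι → Prop) (χ : ℤ) (s : Finset ι → ℤ) : Prop where
  cond1 : ∀ Y : Finset ι, BCon conn Y → s Y + s Yᶜ = χ ∨ s Y + s Yᶜ = χ + 1
  cond2a : ∀ Y₁ Y₂ Y₃ : Finset ι, BCon conn Y₁ → BCon conn Y₂ → BCon conn Y₃ →
    Disjoint Y₁ Y₂ → Disjoint Y₁ Y₃ → Disjoint Y₂ Y₃ → Y₁ ∪ Y₂ ∪ Y₃ = univ →
    Degen s χ Y₁ → Degen s χ Y₂ → Degen s χ Y₃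
  cond2b : ∀ Y₁ Y₂ Y₃ : Finset ι, BCon conn Y₁ → BCon conn Y₂ → BCon conn Y₃ →
    Disjoint Y₁ Y₂ → Disjoint Y₁ Y₃ → Disjoint Y₂ Y₃ → Y₁ ∪ Y₂ ∪ Y₃ = univ →
    (¬ Degen s χ Y₁ ∧ ¬ Degen s χ Y₂ ∧ ¬ Degen s χ Y₃ →
      s Y₁ + s Y₂ + s Y₃ - χ = 1 ∨ s Y₁ + s Y₂ + s Y₃ - χ = 2) ∧
    (((Degen s χ Y₁ ∧ ¬ Degen s χ Y₂ ∧ ¬ Degen s χ Y₃) ∨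
      (¬ Degen s χ Y₁ ∧ Degen s χ Y₂ ∧ ¬ Degen s χ Y₃) ∨
      (¬ Degen s χ Y₁ ∧ ¬ Degen s χ Y₂ ∧ Degen s χ Y₃)) →
      s Y₁ + s Y₂ + s Y₃ - χ = 1) ∧
    (Degen s χ Y₁ ∧ Degen s χ Y₂ ∧ Degen s χ Y₃ → s Y₁ + s Y₂ + s Y₃ - χ = 0)

lemma ceil_eq_floor_iff' (a : ℝ) : ⌈a⌉ = ⌊a⌋ ↔ ∃ m : ℤ, a = (m : ℝ) := by
  constructor
  · intro h
    refine ⟨⌊a⌋, le_antisymm ?_ (Int.floor_le a)⟩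
    calc a ≤ (⌈a⌉ : ℝ) := Int.le_ceil a
    _ = (⌊a⌋ : ℝ) := by rw [h]
  · rintro ⟨m, rfl⟩; simp

lemma ceil_pair (a : ℝ) (n : ℤ) : ⌈a⌉ + ⌈(n : ℝ) - a⌉ = n - ⌊a⌋ + ⌈a⌉ := by
  have h : (n : ℝ) - a = -a + n := by ring
  rw [h, Int.ceil_add_intCast, Int.ceil_neg]; ring

/-- The upper integral part of a numerical polarization of characteristic `χ` is a V-stability
condition of characteristic `χ`, whose degenerate subcurves are exactly the biconnected
subcurves on which the polarization takes an integral value. -/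
theorem stmt_2 (conn : Finset ι → Prop) (ψ : Finset ι → ℝ) (χ : ℤ)
    (hadd : ∀ Y Z : Finset ι, Disjoint Y Z → ψ (Y ∪ Z) = ψ Y + ψ Z)
    (hchi : ψ univ = (χ : ℝ)) :
    IsVStab conn χ (fun Y => ⌈ψ Y⌉) ∧
    ∀ Y : Finset ι, BCon conn Y →
      (Degen (fun Y => ⌈ψ Y⌉) χ Y ↔ ∃ n : ℤ, ψ Y = (n : ℝ)) := by
  have hcompl : ∀ Y : Finset ι, ψ Y + ψ Yᶜ = (χ : ℝ) := by
    intro Y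
    rw [← hadd Y Yᶜ disjoint_compl_right, union_compl, hchi]
  have hcompl' : ∀ Y : Finset ι, ψ Yᶜ = (χ : ℝ) - ψ Y := fun Y => by linarith [hcompl Y]
  have hdegen : ∀ Y : Finset ι,
      Degen (fun Y => ⌈ψ Y⌉) χ Y ↔ ∃ n : ℤ, ψ Y = (n : ℝ) := by
    intro Y
    rw [← ceil_eq_floor_iff']
    show ⌈ψ Y⌉ + ⌈ψ Yᶜ⌉ = χ ↔ _
    rw [hcompl' Y, ceil_pair]
    omega
  have hsum : ∀ Y₁ Y₂ Y₃ : Finset ι, Disjoint Y₁ Y₂ → Disjoint Y₁ Y₃ → Disjoint Y₂ Y₃ →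
      Y₁ ∪ Y₂ ∪ Y₃ = univ → ψ Y₁ + ψ Y₂ + ψ Y₃ = (χ : ℝ) := by
    intro Y₁ Y₂ Y₃ h12 h13 h23 hu
    rw [← hadd Y₁ Y₂ h12, ← hadd (Y₁ ∪ Y₂) Y₃ (Finset.disjoint_union_left.mpr ⟨h13, h23⟩), hu, hchi]
  have hd0 : ∀ Y : Finset ι, 0 ≤ (⌈ψ Y⌉ : ℝ) - ψ Y := fun Y => by
    linarith [Int.le_ceil (ψ Y)]
  have hd1 : ∀ Y : Finset ι, (⌈ψ Y⌉ : ℝ) - ψ Y < 1 := fun Y => by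
    linarith [Int.ceil_lt_add_one (ψ Y)]
  have hdz : ∀ Y : Finset ι, ((⌈ψ Y⌉ : ℝ) - ψ Y = 0) ↔ ∃ n : ℤ, ψ Y = (n : ℝ) := by
    intro Y
    constructor
    · intro h; exact ⟨⌈ψ Y⌉, by linarith⟩
    · rintro ⟨n, h⟩; rw [h]; simp
  have hdpos : ∀ Y : Finset ι, ¬ Degen (fun Y => ⌈ψ Y⌉) χ Y → 0 < (⌈ψ Y⌉ : ℝ) - ψ Y := by
    intro Y h
    rcases lt_or_eq_of_le (hd0 Y) with h' | h'
    · exact h'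
    · exact absurd ((hdegen Y).mpr ((hdz Y).mp h'.symm)) h
  refine ⟨⟨?_, ?_, ?_⟩, fun Y _ => hdegen Y⟩
  · intro Y _
    show ⌈ψ Y⌉ + ⌈ψ Yᶜ⌉ = χ ∨ ⌈ψ Y⌉ + ⌈ψ Yᶜ⌉ = χ + 1
    rw [hcompl' Y, ceil_pair]
    have := Int.ceil_le_floor_add_one (ψ Y)
    have := Int.floor_le_ceil (ψ Y)
    omega
  · intro Y₁ Y₂ Y₃ _ _ _ h12 h13 h23 hu hD1 hD2
    obtain ⟨a, ha⟩ := (hdegen Y₁).mp hD1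
    obtain ⟨b, hb⟩ := (hdegen Y₂).mp hD2
    refine (hdegen Y₃).mpr ⟨χ - a - b, ?_⟩
    have := hsum Y₁ Y₂ Y₃ h12 h13 h23 hu
    push_cast
    linarith
  · intro Y₁ Y₂ Y₃ _ _ _ h12 h13 h23 hu
    have hS : ((⌈ψ Y₁⌉ + ⌈ψ Y₂⌉ + ⌈ψ Y₃⌉ - χ : ℤ) : ℝ) =
        ((⌈ψ Y₁⌉ : ℝ) - ψ Y₁) + ((⌈ψ Y₂⌉ : ℝ) - ψ Y₂) + ((⌈ψ Y₃⌉ : ℝ) - ψ Y₃) := by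
      have := hsum Y₁ Y₂ Y₃ h12 h13 h23 hu
      push_cast
      linarith
    refine ⟨?_, ?_, ?_⟩
    · rintro ⟨h1, h2, h3⟩
      have p1 := hdpos Y₁ h1
      have p2 := hdpos Y₂ h2
      have p3 := hdpos Y₃ h3
      have q1 := hd1 Y₁; have q2 := hd1 Y₂; have q3 := hd1 Y₃
      have hlo : (0 : ℝ) < ((⌈ψ Y₁⌉ + ⌈ψ Y₂⌉ + ⌈ψ Y₃⌉ - χ : ℤ) : ℝ) := by rw [hS]; linarith
      have hhi : ((⌈ψ Y₁⌉ + ⌈ψ Y₂⌉ + ⌈ψ Y₃⌉ - χ : ℤ) : ℝ) < 3 := by rw [hS]; linarith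
      have hlo' : (0 : ℤ) < ⌈ψ Y₁⌉ + ⌈ψ Y₂⌉ + ⌈ψ Y₃⌉ - χ := by exact_mod_cast hlo
      have hhi' : ⌈ψ Y₁⌉ + ⌈ψ Y₂⌉ + ⌈ψ Y₃⌉ - χ < 3 := by exact_mod_cast hhi
      omega
    · intro h
      have key : ∀ Y Z : Finset ι, Degen (fun Y => ⌈ψ Y⌉) χ Y →
          ¬ Degen (fun Y => ⌈ψ Y⌉) χ Z →
          ((⌈ψ Y⌉ : ℝ) - ψ Y = 0) ∧ 0 < (⌈ψ Z⌉ : ℝ) - ψ Z := by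
        intro Y Z hY hZ
        exact ⟨(hdz Y).mpr ((hdegen Y).mp hY), hdpos Z hZ⟩
      have hlohi : (0 : ℝ) < ((⌈ψ Y₁⌉ + ⌈ψ Y₂⌉ + ⌈ψ Y₃⌉ - χ : ℤ) : ℝ) ∧
          ((⌈ψ Y₁⌉ + ⌈ψ Y₂⌉ + ⌈ψ Y₃⌉ - χ : ℤ) : ℝ) < 2 := by
        rcases h with ⟨h1, h2, h3⟩ | ⟨h1, h2, h3⟩ | ⟨h1, h2, h3⟩
        · obtain ⟨e1, p2⟩ := key Y₁ Y₂ h1 h2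
          have p3 := hdpos Y₃ h3
          have q2 := hd1 Y₂; have q3 := hd1 Y₃
          exact ⟨by rw [hS]; linarith, by rw [hS]; linarith⟩
        · obtain ⟨e2, p1⟩ := key Y₂ Y₁ h2 h1
          have p3 := hdpos Y₃ h3
          have q1 := hd1 Y₁; have q3 := hd1 Y₃
          exact ⟨by rw [hS]; linarith, by rw [hS]; linarith⟩
        · obtain ⟨e3, p1⟩ := key Y₃ Y₁ h3 h1
          have p2 := hdpos Y₂ h2
          have q1 := hd1 Y₁; have q2 := hd1 Y₂
          exact ⟨by rw [hS]; linarith, by rw [hS]; linarith⟩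
      have hlo' : (0 : ℤ) < ⌈ψ Y₁⌉ + ⌈ψ Y₂⌉ + ⌈ψ Y₃⌉ - χ := by exact_mod_cast hlohi.1
      have hhi' : ⌈ψ Y₁⌉ + ⌈ψ Y₂⌉ + ⌈ψ Y₃⌉ - χ < 2 := by exact_mod_cast hlohi.2
      omega
    · rintro ⟨h1, h2, h3⟩
      have e1 := (hdz Y₁).mpr ((hdegen Y₁).mp h1)
      have e2 := (hdz Y₂).mpr ((hdegen Y₂).mp h2)
      have e3 := (hdz Y₃).mpr ((hdegen Y₃).mp h3)
      have : ((⌈ψ Y₁⌉ + ⌈ψ Y₂⌉ + ⌈ψ Y₃⌉ - χ : ℤ) : ℝ) = 0 := by rw [hS]; linarith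
      have h0 : (⌈ψ Y₁⌉ + ⌈ψ Y₂⌉ + ⌈ψ Y₃⌉ - χ : ℤ) = 0 := by exact_mod_cast this
      omega
end

section
/- Let χ ∈ ℤ and let s : BCon(X) → ℤ be a function satisfying: (1) s_Y + s_{Y^c} − χ ∈ {0,1} for all Y ∈ BCon(X) (call Y degenerate when this is 0), and (2') for all Y₁, Y₂ ∈ BCon(X) without common components with Y₁ ∪ Y₂ ∈ BCon(X): s_{Y₁∪Y₂} − s_{Y₁} − s_{Y₂} = 0 if Y₁ or Y₂ is degenerate, = −1 if Y₁, Y₂ are nondegenerate and Y₁∪Y₂ is degenerate, and ∈ {0,−1} if all three are nondegenerate. Then s is a V-stability condition of characteristic χ, i.e. it also satisfies: for any three biconnected subcurves Y₁, Y₂, Y₃ without pairwise common components covering X, (a) if two are degenerate so is the third, and (b) s_{Y₁}+s_{Y₂}+s_{Y₃}−χ ∈ {1,2} if none degenerate, = 1 if exactly one degenerate, = 0 if all three degenerate. -/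
open Finset

variable {ι : Type*} [Fintype ι] [DecidableEq ι]

private lemma bcon_compl {conn : Finset ι → Prop} {Y : Finset ι} (h : BCon conn Y) :
    BCon conn Yᶜ := by
  obtain ⟨a, b, c, d⟩ := h
  exact ⟨b, by simpa using a, d, by simpa using c⟩

private lemma union_compl_aux {Y₁ Y₂ Y₃ : Finset ι} (d12 : Disjoint Y₁ Y₂)
    (d13 : Disjoint Y₁ Y₃) (hu : Y₁ ∪ Y₂ ∪ Y₃ = univ) : Y₂ ∪ Y₃ = Y₁ᶜ := by
  ext x
  have hx := (Finset.ext_iff.mp hu x).2 (mem_univ x)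
  simp only [mem_union] at hx
  simp only [mem_union, mem_compl]
  have h12 := Finset.disjoint_left.mp d12
  have h13 := Finset.disjoint_left.mp d13
  constructor
  · rintro (h | h) h1
    exacts [h12 h1 h, h13 h1 h]
  · tauto

set_option maxHeartbeats 2000000 in
private lemma triple_arith (conn : Finset ι → Prop) (χ : ℤ) (s : Finset ι → ℤ)
    (cond1 : ∀ Y : Finset ι, BCon conn Y → s Y + s Yᶜ = χ ∨ s Y + s Yᶜ = χ + 1)
    (cond2' : ∀ Y₁ Y₂ : Finset ι, BCon conn Y₁ → BCon conn Y₂ → Disjoint Y₁ Y₂ →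
      BCon conn (Y₁ ∪ Y₂) →
      (((Degen s χ Y₁ ∨ Degen s χ Y₂) → s (Y₁ ∪ Y₂) - s Y₁ - s Y₂ = 0) ∧
       (¬ Degen s χ Y₁ → ¬ Degen s χ Y₂ → Degen s χ (Y₁ ∪ Y₂) →
         s (Y₁ ∪ Y₂) - s Y₁ - s Y₂ = -1) ∧
       (¬ Degen s χ Y₁ → ¬ Degen s χ Y₂ → ¬ Degen s χ (Y₁ ∪ Y₂) →
         s (Y₁ ∪ Y₂) - s Y₁ - s Y₂ = 0 ∨ s (Y₁ ∪ Y₂) - s Y₁ - s Y₂ = -1)))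
    (Y₁ Y₂ Y₃ : Finset ι) (h1 : BCon conn Y₁) (h2 : BCon conn Y₂) (h3 : BCon conn Y₃)
    (d12 : Disjoint Y₁ Y₂) (d13 : Disjoint Y₁ Y₃) (d23 : Disjoint Y₂ Y₃)
    (hu : Y₁ ∪ Y₂ ∪ Y₃ = univ) :
    (Degen s χ Y₁ → Degen s χ Y₂ → Degen s χ Y₃) ∧
    ((¬ Degen s χ Y₁ ∧ ¬ Degen s χ Y₂ ∧ ¬ Degen s χ Y₃ →
      s Y₁ + s Y₂ + s Y₃ - χ = 1 ∨ s Y₁ + s Y₂ + s Y₃ - χ = 2) ∧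
    (((Degen s χ Y₁ ∧ ¬ Degen s χ Y₂ ∧ ¬ Degen s χ Y₃) ∨
      (¬ Degen s χ Y₁ ∧ Degen s χ Y₂ ∧ ¬ Degen s χ Y₃) ∨
      (¬ Degen s χ Y₁ ∧ ¬ Degen s χ Y₂ ∧ Degen s χ Y₃)) →
      s Y₁ + s Y₂ + s Y₃ - χ = 1) ∧
    (Degen s χ Y₁ ∧ Degen s χ Y₂ ∧ Degen s χ Y₃ → s Y₁ + s Y₂ + s Y₃ - χ = 0)) := by
  have u1 : Y₂ ∪ Y₃ = Y₁ᶜ := union_compl_aux d12 d13 hu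
  have u2 : Y₁ ∪ Y₃ = Y₂ᶜ := by
    refine union_compl_aux d12.symm d23 ?_
    rw [show Y₂ ∪ Y₁ ∪ Y₃ = Y₁ ∪ Y₂ ∪ Y₃ by rw [union_comm Y₂ Y₁]]
    exact hu
  have u3 : Y₁ ∪ Y₂ = Y₃ᶜ := by
    refine union_compl_aux d13.symm d23.symm ?_
    rw [show Y₃ ∪ Y₁ ∪ Y₂ = Y₁ ∪ Y₂ ∪ Y₃ by
      ext x; simp only [mem_union]; tauto]
    exact hu
  have bcU1 : BCon conn (Y₂ ∪ Y₃) := u1 ▸ bcon_compl h1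
  have bcU2 : BCon conn (Y₁ ∪ Y₃) := u2 ▸ bcon_compl h2
  have bcU3 : BCon conn (Y₁ ∪ Y₂) := u3 ▸ bcon_compl h3
  obtain ⟨A1, B1, C1⟩ := cond2' Y₂ Y₃ h2 h3 d23 bcU1
  obtain ⟨A2, B2, C2⟩ := cond2' Y₁ Y₃ h1 h3 d13 bcU2
  obtain ⟨A3, B3, C3⟩ := cond2' Y₁ Y₂ h1 h2 d12 bcU3
  rw [u1] at A1 B1 C1
  rw [u2] at A2 B2 C2
  rw [u3] at A3 B3 C3
  have e1 := cond1 Y₁ h1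
  have e2 := cond1 Y₂ h2
  have e3 := cond1 Y₃ h3
  simp only [Degen, compl_compl] at A1 B1 C1 A2 B2 C2 A3 B3 C3 ⊢
  refine ⟨?_, ?_, ?_, ?_⟩
  · intro hd1 hd2
    have hA := A3 (Or.inl hd1)
    have hB := A1 (Or.inl hd2)
    omega
  · rintro ⟨nd1, nd2, nd3⟩
    have hC := C3 nd1 nd2 (by intro h; exact nd3 (by omega))
    omega
  · rintro (⟨hd1, nd2, nd3⟩ | ⟨nd1, hd2, nd3⟩ | ⟨nd1, nd2, hd3⟩)
    · have hA := A3 (Or.inl hd1)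
      omega
    · have hA := A3 (Or.inr hd2)
      omega
    · have hA := A1 (Or.inr hd3)
      omega
  · rintro ⟨hd1, hd2, hd3⟩
    have hA := A3 (Or.inl hd1)
    omega

/-- Conditions (1) and (2') imply that `s` is a V-stability condition of characteristic `χ`. -/
theorem stmt_4 (conn : Finset ι → Prop) (χ : ℤ) (s : Finset ι → ℤ)
    (cond1 : ∀ Y : Finset ι, BCon conn Y → s Y + s Yᶜ = χ ∨ s Y + s Yᶜ = χ + 1)
    (cond2' : ∀ Y₁ Y₂ : Finset ι, BCon conn Y₁ → BCon conn Y₂ → Disjoint Y₁ Y₂ →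
      BCon conn (Y₁ ∪ Y₂) →
      (((Degen s χ Y₁ ∨ Degen s χ Y₂) → s (Y₁ ∪ Y₂) - s Y₁ - s Y₂ = 0) ∧
       (¬ Degen s χ Y₁ → ¬ Degen s χ Y₂ → Degen s χ (Y₁ ∪ Y₂) →
         s (Y₁ ∪ Y₂) - s Y₁ - s Y₂ = -1) ∧
       (¬ Degen s χ Y₁ → ¬ Degen s χ Y₂ → ¬ Degen s χ (Y₁ ∪ Y₂) →
         s (Y₁ ∪ Y₂) - s Y₁ - s Y₂ = 0 ∨ s (Y₁ ∪ Y₂) - s Y₁ - s Y₂ = -1))) :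
    IsVStab conn χ s := by
  refine ⟨cond1, ?_, ?_⟩
  · intro Y₁ Y₂ Y₃ h1 h2 h3 d12 d13 d23 hu
    exact (triple_arith conn χ s cond1 cond2' Y₁ Y₂ Y₃ h1 h2 h3 d12 d13 d23 hu).1
  · intro Y₁ Y₂ Y₃ h1 h2 h3 d12 d13 d23 hu
    exact (triple_arith conn χ s cond1 cond2' Y₁ Y₂ Y₃ h1 h2 h3 d12 d13 d23 hu).2
end

section
/- Let s be a V-stability condition of characteristic χ on X. If W₁, W₂ ∈ BCon(X) are s-degenerate, have no common irreducible component, and W₁ ∪ W₂ ∈ BCon(X) is also s-degenerate, then s_{W₁∪W₂} = s_{W₁} + s_{W₂}. Similarly, if W₁, W₂ ∈ BCon(X) are s-degenerate with no common component and W₁ ∪ W₂ = X, then s_{W₁} + s_{W₂} = χ. -/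
open Finset

variable {ι : Type*} [Fintype ι] [DecidableEq ι]

/-- Additivity of a V-stability condition on degenerate subcurves: if `W₁, W₂` are disjoint
degenerate biconnected subcurves, then `s (W₁ ∪ W₂) = s W₁ + s W₂` whenever `W₁ ∪ W₂` is
biconnected and degenerate, and `s W₁ + s W₂ = χ` whenever `W₁ ∪ W₂ = X`. -/
theorem stmt_6 (conn : Finset ι → Prop) (χ : ℤ) (s : Finset ι → ℤ)
    (hs : IsVStab conn χ s) (W₁ W₂ : Finset ι)
    (h1 : BCon conn W₁) (h2 : BCon conn W₂)
    (hd1 : Degen s χ W₁) (hd2 : Degen s χ W₂) (hdisj : Disjoint W₁ W₂) :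
    (BCon conn (W₁ ∪ W₂) → Degen s χ (W₁ ∪ W₂) → s (W₁ ∪ W₂) = s W₁ + s W₂) ∧
    (W₁ ∪ W₂ = univ → s W₁ + s W₂ = χ) := by
  constructor
  · intro hb hdeg
    set Y₃ := (W₁ ∪ W₂)ᶜ with hY₃
    have hb3 : BCon conn Y₃ := by
      obtain ⟨a, b, c, d⟩ := hb
      exact ⟨b, by simpa [hY₃] using a, d, by simpa [hY₃] using c⟩
    have hd3 : Degen s χ Y₃ := by
      unfold Degen at hdeg ⊢
      simp only [hY₃, compl_compl]
      linarith
    have hdisj13 : Disjoint W₁ Y₃ := by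
      simp only [hY₃]
      exact disjoint_compl_right.mono_left subset_union_left
    have hdisj23 : Disjoint W₂ Y₃ := by
      simp only [hY₃]
      exact disjoint_compl_right.mono_left subset_union_right
    have huniv : W₁ ∪ W₂ ∪ Y₃ = univ := by
      simp only [hY₃, Finset.union_compl]
    have := (hs.cond2b W₁ W₂ Y₃ h1 h2 hb3 hdisj hdisj13 hdisj23 huniv).2.2
      ⟨hd1, hd2, hd3⟩
    unfold Degen at hdeg
    simp only [hY₃] at this hdeg
    linarith
  · intro hu
    have hW₂ : W₂ = W₁ᶜ := by
      apply Finset.eq_of_subset_of_card_le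
      · intro x hx
        simp only [Finset.mem_compl]
        exact fun hx1 => (Finset.disjoint_left.mp hdisj) hx1 hx
      · have : W₁.card + W₂.card ≥ Fintype.card ι := by
          calc Fintype.card ι = (W₁ ∪ W₂).card := by rw [hu]; simp
            _ ≤ W₁.card + W₂.card := Finset.card_union_le _ _
        have := Finset.card_compl W₁ (α := ι)
        omega
    rw [hW₂]
    exact hd1
end

section
/- Let X_s and X_t be connected reduced curves and let f : Sub(X_s) → Sub(X_t) be a surjective map on subcurves that preserves joins, meets, complements, and the number of connected components (in particular f maps BCon(X_s) onto biconnected subcurves of X_t). If t is a V-stability condition of characteristic χ on X_t, then the pullback f*(t) defined by (f*(t))_Y := t_{f(Y)} for Y ∈ BCon(X_s) is a V-stability condition of characteristic χ on X_s, and its degeneracy set is D(f*(t)) = f⁻¹(D(t)) ∩ BCon(X_s). -/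
open Finset

variable {ι : Type*} [Fintype ι] [DecidableEq ι]

/-- Pullback of a V-stability condition along a surjective map of subcurve lattices
preserving joins, meets, complements, nonemptiness and connectivity: the pullback is a
V-stability condition of the same characteristic and its degeneracy set is the preimage of
the degeneracy set. -/
theorem stmt_12 {κ : Type*} [Fintype κ] [DecidableEq κ]
    (conns : Finset ι → Prop) (connt : Finset κ → Prop)
    (f : Finset ι → Finset κ) (hsurj : Function.Surjective f)
    (hjoin : ∀ Y Z : Finset ι, f (Y ∪ Z) = f Y ∪ f Z)
    (hmeet : ∀ Y Z : Finset ι, f (Y ∩ Z) = f Y ∩ f Z)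
    (hcompl : ∀ Y : Finset ι, f Yᶜ = (f Y)ᶜ)
    (hne : ∀ Y : Finset ι, (f Y).Nonempty ↔ Y.Nonempty)
    (hconn : ∀ Y : Finset ι, Y.Nonempty → (conns Y ↔ connt (f Y)))
    (χ : ℤ) (t : Finset κ → ℤ) (ht : IsVStab connt χ t) :
    IsVStab conns χ (fun Y => t (f Y)) ∧
    ∀ Y : Finset ι, BCon conns Y →
      (Degen (fun Y => t (f Y)) χ Y ↔ Degen t χ (f Y)) := by
  have hfempty : f ∅ = ∅ := by
    by_contra h
    exact h (Finset.eq_empty_of_forall_notMem (fun x hx =>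
      (Finset.not_nonempty_empty ((hne ∅).mp ⟨x, hx⟩))))
  have hbcon : ∀ Y : Finset ι, BCon conns Y → BCon connt (f Y) := by
    intro Y ⟨h1, h2, h3, h4⟩
    refine ⟨(hne Y).mpr h1, ?_, (hconn Y h1).mp h3, ?_⟩
    · rw [← hcompl]; exact (hne Yᶜ).mpr h2
    · rw [← hcompl]; exact (hconn Yᶜ h2).mp h4
  have hdisj : ∀ Y Z : Finset ι, Disjoint Y Z → Disjoint (f Y) (f Z) := by
    intro Y Z h
    rw [Finset.disjoint_iff_inter_eq_empty] at h ⊢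
    rw [← hmeet, h, hfempty]
  have huniv : ∀ Y₁ Y₂ Y₃ : Finset ι, Y₁ ∪ Y₂ ∪ Y₃ = univ →
      f Y₁ ∪ f Y₂ ∪ f Y₃ = univ := by
    intro Y₁ Y₂ Y₃ h
    have : f univ = univ := by
      have := hcompl (∅ : Finset ι)
      simpa [hfempty] using this
    rw [← hjoin, ← hjoin, h, this]
  have hdeg : ∀ Y : Finset ι, Degen (fun Y => t (f Y)) χ Y ↔ Degen t χ (f Y) := by
    intro Y
    simp only [Degen, hcompl]
  refine ⟨⟨?_, ?_, ?_⟩, fun Y _ => hdeg Y⟩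
  · intro Y hY
    have := ht.cond1 (f Y) (hbcon Y hY)
    simpa [hcompl] using this
  · intro Y₁ Y₂ Y₃ h1 h2 h3 d12 d13 d23 hu dd1 dd2
    exact (hdeg Y₃).mpr (ht.cond2a (f Y₁) (f Y₂) (f Y₃) (hbcon _ h1) (hbcon _ h2)
      (hbcon _ h3) (hdisj _ _ d12) (hdisj _ _ d13) (hdisj _ _ d23)
      (huniv _ _ _ hu) ((hdeg Y₁).mp dd1) ((hdeg Y₂).mp dd2))
  · intro Y₁ Y₂ Y₃ h1 h2 h3 d12 d13 d23 hu
    have := ht.cond2b (f Y₁) (f Y₂) (f Y₃) (hbcon _ h1) (hbcon _ h2)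
      (hbcon _ h3) (hdisj _ _ d12) (hdisj _ _ d13) (hdisj _ _ d23) (huniv _ _ _ hu)
    simpa [hdeg Y₁, hdeg Y₂, hdeg Y₃] using this
end

section
/- Let Γ be the incidence graph of X with a fixed spanning tree T, and for a subcurve Y let val_T(Y) denote the number of edges of T joining a vertex of Y to a vertex of Y^c. Let s be a V-stability condition on X of characteristic 0 such that 0 ≤ s_Y ≤ 1 for every Y ∈ BCon(X) with val_T(Y) = 1. Then for every Y ∈ BCon(X) one has −val_T(Y) + 1 ≤ s_Y ≤ val_T(Y). -/
open Finset

variable {ι : Type*} [Fintype ι] [DecidableEq ι]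

/-- Connectivity of a subcurve via the incidence graph `G`. -/
def gconn (G : SimpleGraph ι) (Y : Finset ι) : Prop :=
  (G.induce (Y : Set ι)).Connected

/-- The number of edges of `T` joining `Y` to its complement. -/
def valT (T : SimpleGraph ι) [DecidableRel T.Adj] (Y : Finset ι) : ℕ :=
  (Finset.univ.filter (fun p : ι × ι => p.1 ∈ Y ∧ p.2 ∉ Y ∧ T.Adj p.1 p.2)).card

set_option linter.unusedSectionVars false
set_option maxHeartbeats 1000000

/-- Reachability within a vertex subset. -/
def ReachIn (G : SimpleGraph ι) (S : Finset ι) (a b : ι) : Prop :=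
  ∃ w : G.Walk a b, ∀ v ∈ w.support, v ∈ S

namespace ReachIn

variable {G T : SimpleGraph ι} {S S' : Finset ι} {a b c : ι}

lemma refl (ha : a ∈ S) : ReachIn G S a a :=
  ⟨SimpleGraph.Walk.nil, by simp [ha]⟩

lemma symm (h : ReachIn G S a b) : ReachIn G S b a := by
  obtain ⟨w, hw⟩ := h
  exact ⟨w.reverse, by simpa [SimpleGraph.Walk.support_reverse] using hw⟩

lemma trans (h : ReachIn G S a b) (h' : ReachIn G S b c) : ReachIn G S a c := by
  obtain ⟨w, hw⟩ := h
  obtain ⟨w', hw'⟩ := h'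
  refine ⟨w.append w', fun v hv => ?_⟩
  rw [SimpleGraph.Walk.support_append] at hv
  rcases List.mem_append.1 hv with h | h
  · exact hw _ h
  · exact hw' _ (List.mem_of_mem_tail h)

lemma mono (hS : S ⊆ S') (h : ReachIn G S a b) : ReachIn G S' a b := by
  obtain ⟨w, hw⟩ := h
  exact ⟨w, fun v hv => hS (hw v hv)⟩

lemma of_adj (hab : G.Adj a b) (ha : a ∈ S) (hb : b ∈ S) : ReachIn G S a b :=
  ⟨hab.toWalk, by
    intro v hv
    simp only [SimpleGraph.Walk.support_cons, SimpleGraph.Walk.support_nil,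
      List.mem_cons, List.mem_singleton, List.not_mem_nil, or_false] at hv
    rcases hv with rfl | rfl
    · exact ha
    · exact hb⟩

lemma mono_graph (hTG : T ≤ G) (h : ReachIn T S a b) : ReachIn G S a b := by
  obtain ⟨w, hw⟩ := h
  refine ⟨w.mapLe hTG, fun v hv => ?_⟩
  have : (w.mapLe hTG).support = w.support := by
    simp only [SimpleGraph.Walk.mapLe, SimpleGraph.Walk.support_map]
    exact List.map_id _
  rw [this] at hv
  exact hw v hv

/-- Every vertex on a witnessing walk is reachable from the start. -/
lemma of_mem_support (w : G.Walk a b) (hw : ∀ v ∈ w.support, v ∈ S)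
    (hv : c ∈ w.support) : ReachIn G S a c :=
  ⟨w.takeUntil c hv, fun v h => hw v (SimpleGraph.Walk.support_takeUntil_subset _ _ h)⟩

end ReachIn

section GconnAPI

variable {G T : SimpleGraph ι} {S Y : Finset ι} {a b : ι}

lemma reachIn_induce_reachable {a b : ι} (ha : a ∈ Y) (hb : b ∈ Y)
    (h : ReachIn G Y a b) : (G.induce (Y : Set ι)).Reachable ⟨a, by simpa using ha⟩ ⟨b, by simpa using hb⟩ := by
  obtain ⟨w, hw⟩ := h
  induction w with
  | nil => rfl
  | @cons u v c huv p ih =>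
      have hv : v ∈ Y := hw v (by simp [SimpleGraph.Walk.support_cons])
      have h1 : (G.induce (Y : Set ι)).Adj ⟨u, by simpa using ha⟩ ⟨v, by simpa using hv⟩ := by
        simpa using huv
      exact (SimpleGraph.Adj.reachable h1).trans
        (ih hv hb (fun x hx => hw x (by simp [SimpleGraph.Walk.support_cons, hx])))

lemma gconn_iff : gconn G Y ↔ Y.Nonempty ∧ ∀ a ∈ Y, ∀ b ∈ Y, ReachIn G Y a b := by
  constructor
  · intro h
    have hpre := h.preconnected
    have hYne : Y.Nonempty := by
      obtain ⟨⟨x, hx⟩⟩ := h.nonempty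
      exact ⟨x, by simpa using hx⟩
    refine ⟨hYne, fun a ha b hb => ?_⟩
    obtain ⟨w⟩ := hpre ⟨a, by simpa using ha⟩ ⟨b, by simpa using hb⟩
    refine ⟨w.map (SimpleGraph.Embedding.induce (Y : Set ι)).toHom, fun v hv => ?_⟩
    erw [SimpleGraph.Walk.support_map] at hv
    obtain ⟨⟨u, hu⟩, _, rfl⟩ := List.mem_map.1 hv
    simpa using hu
  · rintro ⟨⟨x, hx⟩, hreach⟩
    haveI : Nonempty (Y : Set ι) := ⟨⟨x, by simpa using hx⟩⟩
    refine ⟨fun a b => ?_⟩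
    obtain ⟨a, ha⟩ := a
    obtain ⟨b, hb⟩ := b
    exact reachIn_induce_reachable (by simpa using ha) (by simpa using hb)
      (hreach a (by simpa using ha) b (by simpa using hb))

/-- glue two connected pieces along an edge -/
lemma gconn_union {A B : Finset ι} {a₀ b₀ : ι}
    (hA : gconn G A) (hB : gconn G B) (ha₀ : a₀ ∈ A) (hb₀ : b₀ ∈ B)
    (hadj : G.Adj a₀ b₀) : gconn G (A ∪ B) := by
  rw [gconn_iff] at hA hB ⊢
  obtain ⟨hAne, hAr⟩ := hA
  obtain ⟨hBne, hBr⟩ := hB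
  refine ⟨hAne.mono subset_union_left, fun p hp q hq => ?_⟩
  have hbridge : ReachIn G (A ∪ B) a₀ b₀ :=
    ReachIn.of_adj hadj (mem_union_left _ ha₀) (mem_union_right _ hb₀)
  have toA : ∀ p ∈ A, ReachIn G (A ∪ B) p a₀ := fun p hp =>
    (hAr p hp a₀ ha₀).mono subset_union_left
  have toB : ∀ p ∈ B, ReachIn G (A ∪ B) p b₀ := fun p hp =>
    (hBr p hp b₀ hb₀).mono subset_union_right
  rcases mem_union.1 hp with hp' | hp' <;> rcases mem_union.1 hq with hq' | hq'
  · exact (toA p hp').trans (toA q hq').symm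
  · exact ((toA p hp').trans hbridge).trans (toB q hq').symm
  · exact ((toB p hp').trans hbridge.symm).trans (toA q hq').symm
  · exact (toB p hp').trans (toB q hq').symm

/-- A walk from inside `Y` to outside crosses. -/
lemma walk_cross {a b : ι} (w : T.Walk a b) (ha : a ∈ Y) (hb : b ∉ Y) :
    ∃ x y, x ∈ Y ∧ y ∉ Y ∧ T.Adj x y := by
  induction w with
  | nil => exact absurd ha hb
  | @cons u v c huv p ih =>
      by_cases hv : v ∈ Y
      · exact ih hv hb
      · exact ⟨u, v, ha, hv, huv⟩

/-- In a connected graph there is always a crossing edge. -/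
lemma cross_exists (hTc : T.Connected) (hY : Y.Nonempty) (hYc : Yᶜ.Nonempty) :
    ∃ x y, x ∈ Y ∧ y ∉ Y ∧ T.Adj x y := by
  obtain ⟨a, ha⟩ := hY
  obtain ⟨b, hb⟩ := hYc
  obtain ⟨w⟩ := hTc.preconnected a b
  exact walk_cross w ha (by simpa using hb)

end GconnAPI

section ValT

variable {T : SimpleGraph ι} [DecidableRel T.Adj] {Y Y₁ Y₂ : Finset ι}

lemma valT_compl : valT T Yᶜ = valT T Y := by
  unfold valT
  apply Finset.card_bij (fun p _ => (p.2, p.1))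
  · rintro ⟨x, y⟩ hp
    simp only [mem_filter, mem_univ, true_and, Finset.mem_compl, not_not] at hp ⊢
    exact ⟨by simpa using hp.2.1, by simpa using hp.1, hp.2.2.symm⟩
  · rintro ⟨x, y⟩ hx ⟨x', y'⟩ hy h
    simp only [Prod.mk.injEq] at h
    exact Prod.ext h.2 h.1
  · rintro ⟨x, y⟩ hp
    simp only [mem_filter, mem_univ, true_and, Finset.mem_compl, not_not] at hp ⊢
    exact ⟨(y, x), ⟨by simpa using hp.2.1, by simpa using hp.1, hp.2.2.symm⟩, rfl⟩

lemma valT_pos (hTc : T.Connected) (hY : Y.Nonempty) (hYc : Yᶜ.Nonempty) :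
    0 < valT T Y := by
  obtain ⟨x, y, hx, hy, hadj⟩ := cross_exists hTc hY hYc
  exact Finset.card_pos.2 ⟨(x, y), by simp [hx, hy, hadj]⟩

lemma valT_split (hd : Disjoint Y₁ Y₂) (hcl : ∀ a ∈ Y₁, ∀ b ∈ Y₂, ¬T.Adj a b) :
    valT T (Y₁ ∪ Y₂) = valT T Y₁ + valT T Y₂ := by
  unfold valT
  have h1 : (Finset.univ.filter (fun p : ι × ι => p.1 ∈ Y₁ ∧ p.2 ∉ Y₁ ∧ T.Adj p.1 p.2))
      = Finset.univ.filter (fun p : ι × ι => p.1 ∈ Y₁ ∧ p.2 ∉ Y₁ ∪ Y₂ ∧ T.Adj p.1 p.2) := by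
    apply filter_congr
    rintro ⟨x, y⟩ _
    simp only [mem_union]
    constructor
    · rintro ⟨h1, h2, h3⟩
      refine ⟨h1, ?_, h3⟩
      rintro (hy | hy)
      · exact h2 hy
      · exact hcl x h1 y hy h3
    · rintro ⟨h1, h2, h3⟩
      exact ⟨h1, fun hy => h2 (Or.inl hy), h3⟩
  have h2 : (Finset.univ.filter (fun p : ι × ι => p.1 ∈ Y₂ ∧ p.2 ∉ Y₂ ∧ T.Adj p.1 p.2))
      = Finset.univ.filter (fun p : ι × ι => p.1 ∈ Y₂ ∧ p.2 ∉ Y₁ ∪ Y₂ ∧ T.Adj p.1 p.2) := by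
    apply filter_congr
    rintro ⟨x, y⟩ _
    simp only [mem_union]
    constructor
    · rintro ⟨h1, h2, h3⟩
      refine ⟨h1, ?_, h3⟩
      rintro (hy | hy)
      · exact hcl y hy x h1 h3.symm
      · exact h2 hy
    · rintro ⟨h1, h2, h3⟩
      exact ⟨h1, fun hy => h2 (Or.inr hy), h3⟩
  rw [h1, h2, ← Finset.card_union_of_disjoint, ← Finset.filter_or]
  · apply congrArg
    apply filter_congr
    rintro ⟨x, y⟩ _
    simp only [mem_union]
    tauto
  · rw [Finset.disjoint_left]
    rintro ⟨x, y⟩ hp hq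
    simp only [mem_filter] at hp hq
    exact (Finset.disjoint_left.1 hd) hp.2.1 hq.2.1

end ValT

section Dich

variable {T : SimpleGraph ι} [DecidableRel T.Adj] {Y : Finset ι}

lemma dichotomy (htree : T.IsTree) (h2 : 2 ≤ valT T Y) :
    (∃ x ∈ Y, ∃ z ∈ Y, ¬ ReachIn T Y x z) ∨
    (∃ x ∈ Yᶜ, ∃ z ∈ Yᶜ, ¬ ReachIn T Yᶜ x z) := by
  by_contra hcon
  push_neg at hcon
  obtain ⟨hY, hYc⟩ := hcon
  have h2' : 1 < (Finset.univ.filter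
      (fun p : ι × ι => p.1 ∈ Y ∧ p.2 ∉ Y ∧ T.Adj p.1 p.2)).card := by
    have : valT T Y = (Finset.univ.filter
      (fun p : ι × ι => p.1 ∈ Y ∧ p.2 ∉ Y ∧ T.Adj p.1 p.2)).card := rfl
    omega
  obtain ⟨p, hp, q, hq, hpq⟩ := Finset.one_lt_card.1 h2'
  obtain ⟨x, y⟩ := p
  obtain ⟨x', y'⟩ := q
  simp only [mem_filter, mem_univ, true_and] at hp hq
  obtain ⟨hx, hy, e⟩ := hp
  obtain ⟨hx', hy', e'⟩ := hq
  obtain ⟨w1, hw1⟩ := hY x hx x' hx'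
  obtain ⟨w2, hw2⟩ := hYc y' (Finset.mem_compl.2 hy') y (Finset.mem_compl.2 hy)
  set W : T.Walk x y := w1.append (SimpleGraph.Walk.cons e' w2) with hW
  have hedge : ∀ ed ∈ W.edges, ed ∉ ({s(x, y)} : Set (Sym2 ι)) := by
    intro ed hed hmem
    simp only [Set.mem_singleton_iff] at hmem
    subst hmem
    rw [hW, SimpleGraph.Walk.edges_append, List.mem_append] at hed
    rcases hed with hed | hed
    · exact hy (hw1 y (SimpleGraph.Walk.snd_mem_support_of_mem_edges w1 hed))
    · rw [SimpleGraph.Walk.edges_cons, List.mem_cons] at hed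
      rcases hed with hed | hed
      · rcases Sym2.eq_iff.1 hed with ⟨h1, h2⟩ | ⟨h1, h2⟩
        · exact hpq (by rw [h1, h2])
        · exact hy' (h1 ▸ hx)
      · have := hw2 x (SimpleGraph.Walk.fst_mem_support_of_mem_edges w2 hed)
        exact (Finset.mem_compl.1 this) hx
  have hb := (SimpleGraph.isAcyclic_iff_forall_adj_isBridge.1 htree.IsAcyclic) e
  rw [SimpleGraph.isBridge_iff] at hb
  exact hb ⟨W.toDeleteEdges _ hedge⟩

end Dich

section Split

variable {G T : SimpleGraph ι} [DecidableRel T.Adj] {Y : Finset ι}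

lemma exit_lemma {S Y : Finset ι} {d s₀ : ι} (hSY : S ⊆ Y)
    (w : G.Walk d s₀) (hw : ∀ v ∈ w.support, v ∈ Y) (hd : d ∈ Y) (hdS : d ∉ S)
    (hs : s₀ ∈ S) :
    ∃ a b, ReachIn G (Y \ S) d a ∧ b ∈ S ∧ G.Adj a b := by
  induction w with
  | nil => exact absurd hs hdS
  | @cons u v c huv p ih =>
    have hv : v ∈ Y := hw v (by simp [SimpleGraph.Walk.support_cons])
    by_cases hvS : v ∈ S
    · exact ⟨u, v, ReachIn.refl (mem_sdiff.2 ⟨hd, hdS⟩), hvS, huv⟩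
    · obtain ⟨a, b, hr, hb, hab⟩ :=
        ih (fun x hx => hw x (by simp [SimpleGraph.Walk.support_cons, hx])) hv hvS hs
      exact ⟨a, b, (ReachIn.of_adj huv (mem_sdiff.2 ⟨hd, hdS⟩)
        (mem_sdiff.2 ⟨hv, hvS⟩)).trans hr, hb, hab⟩

lemma split_lemma (hTG : T ≤ G) (hTc : T.Connected)
    (hgY : gconn G Y) (hgYc : gconn G Yᶜ)
    (hdis : ∃ x ∈ Y, ∃ z ∈ Y, ¬ ReachIn T Y x z) :
    ∃ Y₁ Y₂ : Finset ι, Disjoint Y₁ Y₂ ∧ Y₁ ∪ Y₂ = Y ∧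
      BCon (gconn G) Y₁ ∧ BCon (gconn G) Y₂ ∧ (∀ a ∈ Y₁, ∀ b ∈ Y₂, ¬ T.Adj a b) := by
  classical
  obtain ⟨x₀, hx₀, z₀, hz₀, hxz⟩ := hdis
  rw [gconn_iff] at hgY hgYc
  obtain ⟨hYne, hYr⟩ := hgY
  obtain ⟨hYcne, hYcr⟩ := hgYc
  set P : Finset ι → Prop := fun S => S ⊆ Y ∧ S.Nonempty ∧ S ≠ Y ∧
      (∀ a ∈ S, ∀ b ∈ S, ReachIn G S a b) ∧ (∀ a ∈ S, ∀ b ∈ Y \ S, ¬ T.Adj a b) with hPdef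
  have hF0 : P (Y.filter (fun v => ReachIn T Y x₀ v)) := by
    set S₀ := Y.filter (fun v => ReachIn T Y x₀ v) with hS₀
    have hsub : S₀ ⊆ Y := filter_subset _ _
    have hx₀S : x₀ ∈ S₀ := mem_filter.2 ⟨hx₀, ReachIn.refl hx₀⟩
    have hz₀S : z₀ ∉ S₀ := fun h => hxz (mem_filter.1 h).2
    have hreachS : ∀ a ∈ S₀, ReachIn T S₀ x₀ a := by
      intro a ha
      obtain ⟨w, hw⟩ := (mem_filter.1 ha).2
      refine ⟨w, fun v hv => ?_⟩
      exact mem_filter.2 ⟨hw v hv, ReachIn.of_mem_support w hw hv⟩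
    refine ⟨hsub, ⟨x₀, hx₀S⟩, fun h => hz₀S (h ▸ hz₀), ?_, ?_⟩
    · intro a ha b hb
      exact ReachIn.mono_graph hTG ((hreachS a ha).symm.trans (hreachS b hb))
    · intro a ha b hb hadj
      have : b ∈ S₀ := mem_filter.2 ⟨(mem_sdiff.1 hb).1,
        (mem_filter.1 ha).2.trans
          (ReachIn.of_adj hadj (hsub ha) (mem_sdiff.1 hb).1)⟩
      exact (mem_sdiff.1 hb).2 this
  obtain ⟨S, hSF, hmax⟩ := Finset.exists_max_image (univ.filter P) card
    ⟨_, mem_filter.2 ⟨mem_univ _, hF0⟩⟩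
  obtain ⟨hSY, hSne, hSneq, hSr, hScl⟩ := (mem_filter.1 hSF).2
  set R := Y \ S with hRdef
  have hRne : R.Nonempty := by
    rw [Finset.sdiff_nonempty]
    intro h
    exact hSneq (Finset.Subset.antisymm hSY h)
  have hRY : R ⊆ Y := sdiff_subset
  -- R is G-connected
  have hRconn : ∀ p ∈ R, ∀ q ∈ R, ReachIn G R p q := by
    by_contra hcon
    push_neg at hcon
    obtain ⟨x, hx, z, hz, hxzR⟩ := hcon
    set C := R.filter (fun v => ReachIn G R x v) with hCdef
    have hCR : C ⊆ R := filter_subset _ _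
    have hxC : x ∈ C := mem_filter.2 ⟨hx, ReachIn.refl hx⟩
    have hzC : z ∉ C := fun h => hxzR (mem_filter.1 h).2
    set S' := Y \ C with hS'def
    have hSS' : S ⊆ S' := by
      intro a ha
      refine mem_sdiff.2 ⟨hSY ha, fun hc => ?_⟩
      exact (mem_sdiff.1 (hCR hc)).2 ha
    have hcompl : Y \ S' = C := by
      rw [hS'def, Finset.sdiff_sdiff_self_left, Finset.inter_eq_right.2 (hCR.trans hRY)]
    -- membership in S' off S means in R \ C
    have hmemRC : ∀ a ∈ S', a ∉ S → a ∈ R ∧ a ∉ C := by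
      intro a ha haS
      have := mem_sdiff.1 ha
      exact ⟨mem_sdiff.2 ⟨this.1, haS⟩, this.2⟩
    -- reach avoiding C
    have havoid : ∀ p a : ι, p ∉ C → ReachIn G R p a → ReachIn G (R \ C) p a := by
      intro p a hpC ⟨w, hw⟩
      refine ⟨w, fun v hv => mem_sdiff.2 ⟨hw v hv, fun hvC => ?_⟩⟩
      exact hpC (mem_filter.2 ⟨hw _ (w.start_mem_support),
        ((mem_filter.1 hvC).2.trans (ReachIn.of_mem_support w hw hv).symm)⟩)
    have hRCsub : R \ C ⊆ S' := by
      intro v hv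
      obtain ⟨hv1, hv2⟩ := mem_sdiff.1 hv
      exact mem_sdiff.2 ⟨hRY hv1, hv2⟩
    -- every vertex of R \ C reaches S inside S'
    have hout : ∀ p ∈ R, p ∉ C → ∃ b ∈ S, ReachIn G S' p b := by
      intro p hp hpC
      obtain ⟨s₁, hs₁⟩ := hSne
      obtain ⟨w, hw⟩ := hYr p (hRY hp) s₁ (hSY hs₁)
      obtain ⟨a, b, hra, hb, hab⟩ :=
        exit_lemma hSY w hw (hRY hp) (mem_sdiff.1 hp).2 hs₁
      have hra' : ReachIn G (R \ C) p a := havoid p a hpC hra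
      have haS' : a ∈ S' := hRCsub (by
        obtain ⟨w', hw'⟩ := hra'
        exact hw' a w'.end_mem_support)
      exact ⟨b, hb, (hra'.mono hRCsub).trans
        (ReachIn.of_adj hab haS' (hSS' hb))⟩
    have hPS' : P S' := by
      refine ⟨sdiff_subset, hSne.mono hSS', ?_, ?_, ?_⟩
      · intro h
        have : x ∈ S' := h ▸ hRY hx
        exact (mem_sdiff.1 this).2 hxC
      · -- G-connectivity of S'
        intro p hp q hq
        have key : ∀ r ∈ S', ∃ b ∈ S, ReachIn G S' r b := by
          intro r hr
          by_cases hrS : r ∈ S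
          · exact ⟨r, hrS, ReachIn.refl hr⟩
          · obtain ⟨hrR, hrC⟩ := hmemRC r hr hrS
            exact hout r hrR hrC
        obtain ⟨bp, hbp, hrp⟩ := key p hp
        obtain ⟨bq, hbq, hrq⟩ := key q hq
        exact (hrp.trans ((hSr bp hbp bq hbq).mono hSS')).trans hrq.symm
      · -- T-closedness of S'
        intro a ha b hb hadj
        rw [hcompl] at hb
        by_cases haS : a ∈ S
        · exact hScl a haS b (hCR hb) hadj
        · obtain ⟨haR, haC⟩ := hmemRC a ha haS
          exact haC (mem_filter.2 ⟨haR,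
            (mem_filter.1 hb).2.trans
              (ReachIn.of_adj (hTG hadj).symm (hCR hb) haR)⟩)
    have hlt : S.card < S'.card := by
      apply Finset.card_lt_card
      rw [Finset.ssubset_iff_of_subset hSS']
      exact ⟨z, mem_sdiff.2 ⟨hRY hz, hzC⟩, (mem_sdiff.1 hz).2⟩
    have := hmax S' (mem_filter.2 ⟨mem_univ _, hPS'⟩)
    omega
  -- now assemble
  have hclRS : ∀ a ∈ R, ∀ b ∈ S, ¬ T.Adj a b := fun a ha b hb hadj =>
    hScl b hb a ha hadj.symm
  have hScomplne : Sᶜ.Nonempty := by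
    obtain ⟨b, hb⟩ := hYcne
    exact ⟨b, Finset.mem_compl.2 (fun h => (Finset.mem_compl.1 hb) (hSY h))⟩
  have hRcomplne : Rᶜ.Nonempty := by
    obtain ⟨b, hb⟩ := hYcne
    exact ⟨b, Finset.mem_compl.2 (fun h => (Finset.mem_compl.1 hb) (hRY h))⟩
  have hgS : gconn G S := gconn_iff.2 ⟨hSne, hSr⟩
  have hgR : gconn G R := gconn_iff.2 ⟨hRne, hRconn⟩
  have hgYc' : gconn G Yᶜ := gconn_iff.2 ⟨hYcne, hYcr⟩
  have hScompl : Sᶜ = Yᶜ ∪ R := by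
    ext v
    rw [hRdef]
    simp only [Finset.mem_compl, mem_union, mem_sdiff]
    by_cases hv : v ∈ Y
    · constructor
      · intro h; exact Or.inr ⟨hv, h⟩
      · rintro (h | h)
        · exact absurd hv h
        · exact h.2
    · constructor
      · intro _; exact Or.inl hv
      · rintro (_ | h)
        · exact fun hS => hv (hSY hS)
        · exact absurd h.1 hv
  have hRcompl : Rᶜ = Yᶜ ∪ S := by
    ext v
    rw [hRdef]
    simp only [Finset.mem_compl, mem_union, mem_sdiff, not_and, not_not]
    by_cases hv : v ∈ Y
    · constructor
      · intro h; exact Or.inr (h hv)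
      · rintro (h | h)
        · exact absurd hv h
        · exact fun _ => h
    · constructor
      · intro _; exact Or.inl hv
      · rintro (h | h) <;> intro hy
        · exact absurd hy hv
        · exact absurd hy hv
  -- crossing edges for gluing
  have hgScompl : gconn G Sᶜ := by
    obtain ⟨a, b, haR, hbR, hadj⟩ := cross_exists hTc hRne hRcomplne
    have hbS : b ∉ S := fun h => hclRS a haR b h hadj
    have hbYc : b ∈ Yᶜ := by
      rw [Finset.mem_compl]
      intro hbY
      exact hbR (mem_sdiff.2 ⟨hbY, hbS⟩)
    rw [hScompl]
    exact gconn_union hgYc' hgR hbYc haR (hTG hadj).symm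
  have hgRcompl : gconn G Rᶜ := by
    obtain ⟨a, b, haS, hbS, hadj⟩ := cross_exists hTc hSne hScomplne
    have hbR : b ∉ R := fun h => hScl a haS b h hadj
    have hbYc : b ∈ Yᶜ := by
      rw [Finset.mem_compl]
      intro hbY
      exact hbR (mem_sdiff.2 ⟨hbY, hbS⟩)
    rw [hRcompl]
    exact gconn_union hgYc' hgS hbYc haS (hTG hadj).symm
  refine ⟨S, R, Finset.disjoint_sdiff, Finset.union_sdiff_of_subset hSY,
    ⟨hSne, hScomplne, hgS, hgScompl⟩, ⟨hRne, hRcomplne, hgR, hgRcompl⟩, ?_⟩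
  intro a ha b hb
  exact hScl a ha b hb

end Split

section Arith

variable {G T : SimpleGraph ι} [DecidableRel T.Adj] {Y : Finset ι} {s : Finset ι → ℤ}

lemma BCon_compl (h : BCon (gconn G) Y) : BCon (gconn G) Yᶜ := by
  obtain ⟨h1, h2, h3, h4⟩ := h
  exact ⟨h2, by rwa [compl_compl], h4, by rwa [compl_compl]⟩

lemma Degen_compl : Degen s 0 Yᶜ ↔ Degen s 0 Y := by
  unfold Degen
  rw [compl_compl, add_comm]

lemma triple_sum (hs : IsVStab (gconn G) 0 s)
    {Y₁ Y₂ Y₃ : Finset ι} (b1 : BCon (gconn G) Y₁) (b2 : BCon (gconn G) Y₂)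
    (b3 : BCon (gconn G) Y₃)
    (d12 : Disjoint Y₁ Y₂) (d13 : Disjoint Y₁ Y₃) (d23 : Disjoint Y₂ Y₃)
    (hu : Y₁ ∪ Y₂ ∪ Y₃ = univ) :
    (s Y₁ + s Y₂ + s Y₃ = 0 ∧ Degen s 0 Y₁ ∧ Degen s 0 Y₂ ∧ Degen s 0 Y₃) ∨
    (s Y₁ + s Y₂ + s Y₃ = 1) ∨
    (s Y₁ + s Y₂ + s Y₃ = 2 ∧ ¬ Degen s 0 Y₁ ∧ ¬ Degen s 0 Y₂ ∧ ¬ Degen s 0 Y₃) := by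
  have hb := hs.cond2b Y₁ Y₂ Y₃ b1 b2 b3 d12 d13 d23 hu
  have hu2 : Y₁ ∪ Y₃ ∪ Y₂ = univ := by rw [union_right_comm]; exact hu
  have hu3 : Y₂ ∪ Y₃ ∪ Y₁ = univ := by
    rw [union_comm _ Y₁, ← union_assoc]; exact hu
  by_cases h1 : Degen s 0 Y₁ <;> by_cases h2 : Degen s 0 Y₂ <;>
    by_cases h3 : Degen s 0 Y₃
  · have := hb.2.2 ⟨h1, h2, h3⟩
    exact Or.inl ⟨by omega, h1, h2, h3⟩
  · exact absurd (hs.cond2a Y₁ Y₂ Y₃ b1 b2 b3 d12 d13 d23 hu h1 h2) h3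
  · exact absurd (hs.cond2a Y₁ Y₃ Y₂ b1 b3 b2 d13 d12 d23.symm hu2 h1 h3) h2
  · have := hb.2.1 (Or.inl ⟨h1, h2, h3⟩)
    exact Or.inr (Or.inl (by omega))
  · exact absurd (hs.cond2a Y₂ Y₃ Y₁ b2 b3 b1 d23 d12.symm d13.symm hu3 h2 h3) h1
  · have := hb.2.1 (Or.inr (Or.inl ⟨h1, h2, h3⟩))
    exact Or.inr (Or.inl (by omega))
  · have := hb.2.1 (Or.inr (Or.inr ⟨h1, h2, h3⟩))
    exact Or.inr (Or.inl (by omega))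
  · rcases hb.1 ⟨h1, h2, h3⟩ with h | h
    · exact Or.inr (Or.inl (by omega))
    · exact Or.inr (Or.inr ⟨by omega, h1, h2, h3⟩)

lemma upper_bound (hsub : T ≤ G) (htree : T.IsTree)
    (hs : IsVStab (gconn G) 0 s)
    (hnorm : ∀ Y : Finset ι, BCon (gconn G) Y → valT T Y = 1 → 0 ≤ s Y ∧ s Y ≤ 1) :
    ∀ n (Y : Finset ι), BCon (gconn G) Y → valT T Y ≤ n →
      s Y ≤ (valT T Y : ℤ) ∧ (Degen s 0 Y → s Y ≤ (valT T Y : ℤ) - 1) := by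
  intro n
  induction n with
  | zero =>
      intro Y hY _
      have := valT_pos (T := T) htree.isConnected hY.1 hY.2.1
      omega
  | succ n ih =>
      intro Y hY hvn
      by_cases hle : valT T Y ≤ n
      · exact ih Y hY hle
      have hveq : valT T Y = n + 1 := by omega
      have hYc : BCon (gconn G) Yᶜ := BCon_compl hY
      have hvc : valT T Yᶜ = valT T Y := valT_compl
      have hc1 := hs.cond1 Y hY
      by_cases hv1 : valT T Y = 1
      · obtain ⟨h0, h1⟩ := hnorm Y hY hv1
        obtain ⟨h0c, _⟩ := hnorm Yᶜ hYc (by omega)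
        refine ⟨by rw [hv1]; exact_mod_cast h1, fun hd => ?_⟩
        unfold Degen at hd
        rw [hv1]
        push_cast
        omega
      · -- valT T Y ≥ 2
        have hv2 : 2 ≤ valT T Y := by
          have := valT_pos (T := T) htree.isConnected hY.1 hY.2.1
          omega
        rcases dichotomy htree hv2 with hd | hd
        · -- split Y
          obtain ⟨Y₁, Y₂, hdisj, hunion, hB1, hB2, hcl⟩ :=
            split_lemma hsub htree.isConnected hY.2.2.1 hY.2.2.2 hd
          have hvsum : valT T Y₁ + valT T Y₂ = valT T Y := by
            rw [← hunion]; exact (valT_split hdisj hcl).symm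
          have hp1 := valT_pos (T := T) htree.isConnected hB1.1 hB1.2.1
          have hp2 := valT_pos (T := T) htree.isConnected hB2.1 hB2.2.1
          obtain ⟨up1, deg1⟩ := ih Y₁ hB1 (by omega)
          obtain ⟨up2, deg2⟩ := ih Y₂ hB2 (by omega)
          have hsub1 : Y₁ ⊆ Y := hunion ▸ subset_union_left
          have hsub2 : Y₂ ⊆ Y := hunion ▸ subset_union_right
          have d13 : Disjoint Y₁ Yᶜ := disjoint_compl_right.mono_left hsub1
          have d23 : Disjoint Y₂ Yᶜ := disjoint_compl_right.mono_left hsub2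
          have hu : Y₁ ∪ Y₂ ∪ Yᶜ = univ := by
            rw [hunion, Finset.union_compl]
          have hcast : (valT T Y : ℤ) = (valT T Y₁ : ℤ) + (valT T Y₂ : ℤ) := by
            exact_mod_cast hvsum.symm
          have hc1p : (1 : ℤ) ≤ (valT T Y₁ : ℤ) := by exact_mod_cast hp1
          have hc2p : (1 : ℤ) ≤ (valT T Y₂ : ℤ) := by exact_mod_cast hp2
          rcases triple_sum hs hB1 hB2 hYc hdisj d13 d23 hu with
            ⟨ha, hd1, hd2, hd3⟩ | ha | ⟨ha, hn1, hn2, hn3⟩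
          · have hdY : Degen s 0 Y := Degen_compl.1 hd3
            unfold Degen at hdY
            have e1 := deg1 hd1
            have e2 := deg2 hd2
            constructor
            · linarith
            · intro _; linarith
          · by_cases hdY : Degen s 0 Y
            · have hdYc : s Y + s Yᶜ = 0 := hdY
              constructor
              · linarith
              · intro _; linarith
            · have h1' : s Y + s Yᶜ = 1 := by
                rcases hc1 with h | h
                · exact absurd h hdY
                · omega
              exact ⟨by linarith, fun hdY' => absurd hdY' hdY⟩
          · have hdY : ¬ Degen s 0 Y := fun h => hn3 (Degen_compl.2 h)
            have h1' : s Y + s Yᶜ = 1 := by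
              rcases hc1 with h | h
              · exact absurd h hdY
              · omega
            exact ⟨by linarith, fun hdY' => absurd hdY' hdY⟩
        · -- split Yᶜ
          have hgYcc : gconn G Yᶜᶜ := by rw [compl_compl]; exact hY.2.2.1
          obtain ⟨A, B, hdisj, hunion, hBA, hBB, hcl⟩ :=
            split_lemma hsub htree.isConnected hY.2.2.2 hgYcc hd
          have hvsum : valT T A + valT T B = valT T Y := by
            rw [← hvc, ← hunion]; exact (valT_split hdisj hcl).symm
          have hpA := valT_pos (T := T) htree.isConnected hBA.1 hBA.2.1
          have hpB := valT_pos (T := T) htree.isConnected hBB.1 hBB.2.1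
          obtain ⟨upA, degA⟩ := ih A hBA (by omega)
          obtain ⟨upB, degB⟩ := ih B hBB (by omega)
          have hBAc : BCon (gconn G) Aᶜ := BCon_compl hBA
          have hBBc : BCon (gconn G) Bᶜ := BCon_compl hBB
          have hvAc : valT T Aᶜ = valT T A := valT_compl
          have hvBc : valT T Bᶜ = valT T B := valT_compl
          obtain ⟨upAc, degAc⟩ := ih Aᶜ hBAc (by omega)
          obtain ⟨upBc, degBc⟩ := ih Bᶜ hBBc (by omega)
          rw [hvAc] at upAc degAc
          rw [hvBc] at upBc degBc
          have hc1A := hs.cond1 A hBA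
          have hc1B := hs.cond1 B hBB
          -- lower bounds
          have lowA : 1 - (valT T A : ℤ) ≤ s A := by
            by_cases hdA : Degen s 0 A
            · have := degAc (Degen_compl.2 hdA)
              have hA0 : s A + s Aᶜ = 0 := hdA
              linarith
            · have h1' : s A + s Aᶜ = 1 := by
                rcases hc1A with h | h
                · exact absurd h hdA
                · omega
              linarith
          have lowB : 1 - (valT T B : ℤ) ≤ s B := by
            by_cases hdB : Degen s 0 B
            · have := degBc (Degen_compl.2 hdB)
              have hB0 : s B + s Bᶜ = 0 := hdB
              linarith
            · have h1' : s B + s Bᶜ = 1 := by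
                rcases hc1B with h | h
                · exact absurd h hdB
                · omega
              linarith
          have hsubA : A ⊆ Yᶜ := hunion ▸ subset_union_left
          have hsubB : B ⊆ Yᶜ := hunion ▸ subset_union_right
          have d13 : Disjoint A Y := disjoint_compl_left.mono_left hsubA
          have d23 : Disjoint B Y := disjoint_compl_left.mono_left hsubB
          have hu : A ∪ B ∪ Y = univ := by
            rw [hunion, union_comm, Finset.union_compl]
          have hcast : (valT T Y : ℤ) = (valT T A : ℤ) + (valT T B : ℤ) := by
            exact_mod_cast hvsum.symm
          have hcAp : (1 : ℤ) ≤ (valT T A : ℤ) := by exact_mod_cast hpA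
          have hcBp : (1 : ℤ) ≤ (valT T B : ℤ) := by exact_mod_cast hpB
          rcases triple_sum hs hBA hBB hY hdisj d13 d23 hu with
            ⟨ha, _, _, _⟩ | ha | ⟨ha, _, _, hn3⟩
          · exact ⟨by linarith, fun _ => by linarith⟩
          · exact ⟨by linarith, fun _ => by linarith⟩
          · exact ⟨by linarith, fun hdY => absurd hdY hn3⟩

end Arith

/-- Let `T` be a spanning tree of the incidence graph `G` of `X` and let `s` be a
V-stability condition of characteristic `0` with `0 ≤ s_Y ≤ 1` for every biconnected `Y`
with `val_T(Y) = 1`. Then `−val_T(Y) + 1 ≤ s_Y ≤ val_T(Y)` for every biconnected `Y`. -/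
theorem stmt_13 (G T : SimpleGraph ι) [DecidableRel T.Adj]
    (hsub : T ≤ G) (htree : T.IsTree) (s : Finset ι → ℤ)
    (hs : IsVStab (gconn G) 0 s)
    (hnorm : ∀ Y : Finset ι, BCon (gconn G) Y → valT T Y = 1 → 0 ≤ s Y ∧ s Y ≤ 1) :
    ∀ Y : Finset ι, BCon (gconn G) Y →
      -(valT T Y : ℤ) + 1 ≤ s Y ∧ s Y ≤ (valT T Y : ℤ) := by
  intro Y hY
  have hYc : BCon (gconn G) Yᶜ := BCon_compl hY
  have hvc : valT T Yᶜ = valT T Y := valT_compl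
  obtain ⟨up, _⟩ := upper_bound hsub htree hs hnorm (valT T Y) Y hY le_rfl
  obtain ⟨upc, degc⟩ := upper_bound hsub htree hs hnorm (valT T Y) Yᶜ hYc (by omega)
  rw [hvc] at upc degc
  refine ⟨?_, up⟩
  by_cases hdY : Degen s 0 Y
  · have h0 : s Y + s Yᶜ = 0 := hdY
    have := degc (Degen_compl.2 hdY)
    linarith
  · have h1 : s Y + s Yᶜ = 1 := by
      rcases hs.cond1 Y hY with h | h
      · exact absurd h hdY
      · omega
    linarith
end

section
/- Let D¹ ≥ D² in the poset of degeneracy subsets of X, witnessed by a subset E ⊆ D² − D¹, and let s² be a V-stability condition of characteristic χ with D(s²) = D². Define s¹ : BCon(X) → ℤ by: s¹_Y = s²_Y if Y ∈ D¹ or Y ∉ D²; s¹_Y = s²_Y + 1 if Y ∈ E; and s¹_Y = s²_Y if Y ∈ E^c. Then s¹ is a V-stability condition of characteristic χ with D(s¹) = D¹ and s¹ ≥ s². -/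
open Finset

variable {ι : Type*} [Fintype ι] [DecidableEq ι]

/-- A degeneracy subset of the curve. -/
def IsDegSet (conn : Finset ι → Prop) (D : Set (Finset ι)) : Prop :=
  (∀ Y ∈ D, BCon conn Y) ∧ (∀ Y ∈ D, Yᶜ ∈ D) ∧
  (∀ Y₁ ∈ D, ∀ Y₂ ∈ D, Disjoint Y₁ Y₂ → BCon conn (Y₁ ∪ Y₂) → Y₁ ∪ Y₂ ∈ D)

/-- The partial order on degeneracy subsets: `DegGE D₁ D₂` means `D₁ ≥ D₂`. -/
def DegGE (conn : Finset ι → Prop) (D₁ D₂ : Set (Finset ι)) : Prop :=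
  D₁ ⊆ D₂ ∧ ∃ E : Set (Finset ι), E ⊆ D₂ \ D₁ ∧
    (∀ Z ∈ D₂ \ D₁, Z ∈ E ↔ Zᶜ ∉ E) ∧
    (∀ Z₁ ∈ D₂ \ D₁, ∀ Z₂ ∈ D₂ \ D₁, Disjoint Z₁ Z₂ → Z₁ ∪ Z₂ ∈ D₁ → (Z₁ ∈ E ↔ Z₂ ∉ E)) ∧
    (∀ Z₁ ∈ D₂ \ D₁, ∀ Z₂ ∈ D₂ \ D₁, ∀ Z₃ ∈ D₂ \ D₁,
      Disjoint Z₁ Z₂ → Disjoint Z₁ Z₃ → Disjoint Z₂ Z₃ → Z₁ ∪ Z₂ ∪ Z₃ = univ →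
      (Z₁ ∈ E ∨ Z₂ ∈ E ∨ Z₃ ∈ E) ∧ ¬ (Z₁ ∈ E ∧ Z₂ ∈ E ∧ Z₃ ∈ E))

/-- Upper lifting of the degeneracy map: given `D¹ ≥ D²` witnessed by `E` and a V-stability
condition `s²` with degeneracy set `D²`, the function `s¹` (equal to `s²` off `D² − D¹`, to
`s² + 1` on `E` and to `s²` on `Eᶜ`) is a V-stability condition of the same characteristic
with degeneracy set `D¹` and `s¹ ≥ s²`. -/
theorem stmt_18 (conn : Finset ι → Prop) (χ : ℤ) (D₁ D₂ E : Set (Finset ι))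
    (s₁ s₂ : Finset ι → ℤ)
    (hD₁ : IsDegSet conn D₁) (hD₂ : IsDegSet conn D₂) (hsub : D₁ ⊆ D₂)
    (hE : E ⊆ D₂ \ D₁)
    (hEa : ∀ Z ∈ D₂ \ D₁, Z ∈ E ↔ Zᶜ ∉ E)
    (hEb : ∀ Z₁ ∈ D₂ \ D₁, ∀ Z₂ ∈ D₂ \ D₁, Disjoint Z₁ Z₂ → Z₁ ∪ Z₂ ∈ D₁ →
      (Z₁ ∈ E ↔ Z₂ ∉ E))
    (hEc : ∀ Z₁ ∈ D₂ \ D₁, ∀ Z₂ ∈ D₂ \ D₁, ∀ Z₃ ∈ D₂ \ D₁,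
      Disjoint Z₁ Z₂ → Disjoint Z₁ Z₃ → Disjoint Z₂ Z₃ → Z₁ ∪ Z₂ ∪ Z₃ = univ →
      (Z₁ ∈ E ∨ Z₂ ∈ E ∨ Z₃ ∈ E) ∧ ¬ (Z₁ ∈ E ∧ Z₂ ∈ E ∧ Z₃ ∈ E))
    (hs₂ : IsVStab conn χ s₂)
    (hD₂s : ∀ Y : Finset ι, BCon conn Y → (Y ∈ D₂ ↔ Degen s₂ χ Y))
    (hdef₁ : ∀ Y : Finset ι, BCon conn Y → (Y ∈ D₁ ∨ Y ∉ D₂) → s₁ Y = s₂ Y)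
    (hdef₂ : ∀ Y : Finset ι, BCon conn Y → Y ∈ E → s₁ Y = s₂ Y + 1)
    (hdef₃ : ∀ Y : Finset ι, BCon conn Y → Yᶜ ∈ E → s₁ Y = s₂ Y) :
    IsVStab conn χ s₁ ∧
    (∀ Y : Finset ι, BCon conn Y → (Degen s₁ χ Y ↔ Y ∈ D₁)) ∧
    (∀ Y : Finset ι, BCon conn Y → s₂ Y ≤ s₁ Y) := by
  classical
  -- basic complement facts
  have hBc : ∀ Y : Finset ι, BCon conn Y → BCon conn Yᶜ := by
    rintro Y ⟨a, b, c, d⟩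
    exact ⟨b, by simpa using a, d, by simpa using c⟩
  have hcmp : ∀ A B C : Finset ι, Disjoint A B → Disjoint B C → Disjoint A C →
      A ∪ B ∪ C = univ → Cᶜ = A ∪ B := by
    intro A B C dAB dBC dAC hu
    ext a
    simp only [Finset.mem_compl, Finset.mem_union]
    constructor
    · intro ha
      have h1 : a ∈ A ∪ B ∪ C := hu ▸ Finset.mem_univ a
      simp only [Finset.mem_union] at h1
      tauto
    · rintro (h | h) hc
      · exact (Finset.disjoint_left.mp dAC h) hc
      · exact (Finset.disjoint_left.mp dBC h) hc
  -- key value lemma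
  have key : ∀ Y : Finset ι, BCon conn Y →
      (Y ∈ E ∧ s₁ Y = s₂ Y + 1) ∨ (Y ∉ E ∧ s₁ Y = s₂ Y) := by
    intro Y hB
    by_cases hYE : Y ∈ E
    · exact Or.inl ⟨hYE, hdef₂ Y hB hYE⟩
    refine Or.inr ⟨hYE, ?_⟩
    by_cases h1 : Y ∈ D₁
    · exact hdef₁ Y hB (Or.inl h1)
    by_cases h2 : Y ∈ D₂
    · have hc : Yᶜ ∈ E := by
        by_contra hc
        exact hYE ((hEa Y ⟨h2, h1⟩).mpr hc)
      exact hdef₃ Y hB hc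
    · exact hdef₁ Y hB (Or.inr h2)
  -- degeneracy of s₁ characterizes D₁
  have degensum : ∀ Y : Finset ι, BCon conn Y →
      (Y ∈ D₁ ∧ s₁ Y + s₁ Yᶜ = χ) ∨ (Y ∉ D₁ ∧ s₁ Y + s₁ Yᶜ = χ + 1) := by
    intro Y hB
    have hBc' := hBc Y hB
    by_cases h1 : Y ∈ D₁
    · have h1c : Yᶜ ∈ D₁ := hD₁.2.1 Y h1
      have e1 := hdef₁ Y hB (Or.inl h1)
      have e2 := hdef₁ Yᶜ hBc' (Or.inl h1c)
      have hd : s₂ Y + s₂ Yᶜ = χ := (hD₂s Y hB).mp (hsub h1)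
      exact Or.inl ⟨h1, by omega⟩
    by_cases h2 : Y ∈ D₂
    · have h1c : Yᶜ ∉ D₁ := fun hc => h1 (by simpa using hD₁.2.1 Yᶜ hc)
      have hd : s₂ Y + s₂ Yᶜ = χ := (hD₂s Y hB).mp h2
      by_cases hYE : Y ∈ E
      · have e1 := hdef₂ Y hB hYE
        have e2 := hdef₃ Yᶜ hBc' (by simpa using hYE)
        exact Or.inr ⟨h1, by omega⟩
      · have hc : Yᶜ ∈ E := by
          by_contra hc
          exact hYE ((hEa Y ⟨h2, h1⟩).mpr hc)
        have e1 := hdef₃ Y hB hc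
        have e2 := hdef₂ Yᶜ hBc' hc
        exact Or.inr ⟨h1, by omega⟩
    · have h2c : Yᶜ ∉ D₂ := fun hc => h2 (by simpa using hD₂.2.1 Yᶜ hc)
      have e1 := hdef₁ Y hB (Or.inr h2)
      have e2 := hdef₁ Yᶜ hBc' (Or.inr h2c)
      have hnd : ¬ (s₂ Y + s₂ Yᶜ = χ) := fun hd => h2 ((hD₂s Y hB).mpr hd)
      have hc1 : s₂ Y + s₂ Yᶜ = χ ∨ s₂ Y + s₂ Yᶜ = χ + 1 := hs₂.cond1 Y hB
      exact Or.inr ⟨h1, by omega⟩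
  have dgiff : ∀ Y : Finset ι, BCon conn Y → (Degen s₁ χ Y ↔ Y ∈ D₁) := by
    intro Y hB
    rcases degensum Y hB with ⟨h, e⟩ | ⟨h, e⟩
    · exact iff_of_true e h
    · refine iff_of_false (fun hd => ?_) h
      have hd' : s₁ Y + s₁ Yᶜ = χ := hd
      omega
  -- two degenerate (for s₂, i.e. in D₂) forces the third in D₂
  have contra2 : ∀ A B C : Finset ι, BCon conn A → BCon conn B → BCon conn C →
      Disjoint A B → Disjoint A C → Disjoint B C → A ∪ B ∪ C = univ →
      A ∈ D₂ → B ∈ D₂ → C ∉ D₂ → False := by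
    intro A B C hA hB hC dAB dAC dBC hu mA mB mC
    exact mC ((hD₂s C hC).mpr (hs₂.cond2a A B C hA hB hC dAB dAC dBC hu
      ((hD₂s A hA).mp mA) ((hD₂s B hB).mp mB)))
  -- exactly one of the triple in D₂ (and none in D₁)
  have aux1 : ∀ A B C : Finset ι, BCon conn A → BCon conn B → BCon conn C →
      Disjoint A B → Disjoint A C → Disjoint B C → A ∪ B ∪ C = univ →
      A ∈ D₂ → A ∉ D₁ → B ∉ D₂ → C ∉ D₂ →
      s₁ A + s₁ B + s₁ C - χ = 1 ∨ s₁ A + s₁ B + s₁ C - χ = 2 := by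
    intro A B C hA hB hC dAB dAC dBC hu mA nA mB mC
    have s2b := hs₂.cond2b A B C hA hB hC dAB dAC dBC hu
    have hsum : s₂ A + s₂ B + s₂ C - χ = 1 := s2b.2.1
      (Or.inl ⟨(hD₂s A hA).mp mA, fun h => mB ((hD₂s B hB).mpr h),
        fun h => mC ((hD₂s C hC).mpr h)⟩)
    have nBE : B ∉ E := fun h => mB (hE h).1
    have nCE : C ∉ E := fun h => mC (hE h).1
    rcases key B hB with ⟨a, _⟩ | ⟨_, vB⟩
    · exact absurd a nBE
    rcases key C hC with ⟨a, _⟩ | ⟨_, vC⟩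
    · exact absurd a nCE
    rcases key A hA with ⟨_, vA⟩ | ⟨_, vA⟩ <;> omega
  -- exactly one of the triple in D₁
  have aux2 : ∀ A B C : Finset ι, BCon conn A → BCon conn B → BCon conn C →
      Disjoint A B → Disjoint A C → Disjoint B C → A ∪ B ∪ C = univ →
      A ∈ D₁ → B ∉ D₁ → C ∉ D₁ →
      s₁ A + s₁ B + s₁ C - χ = 1 := by
    intro A B C hA hB hC dAB dAC dBC hu pA nB nC
    have s2b := hs₂.cond2b A B C hA hB hC dAB dAC dBC hu
    have mA : A ∈ D₂ := hsub pA
    have dA : Degen s₂ χ A := (hD₂s A hA).mp mA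
    have nAE : A ∉ E := fun h => (hE h).2 pA
    rcases key A hA with ⟨a, _⟩ | ⟨_, vA⟩
    · exact absurd a nAE
    by_cases mB : B ∈ D₂ <;> by_cases mC : C ∈ D₂
    · -- both in D₂ \ D₁
      have hsum : s₂ A + s₂ B + s₂ C - χ = 0 :=
        s2b.2.2 ⟨dA, (hD₂s B hB).mp mB, (hD₂s C hC).mp mC⟩
      have hu' : B ∪ C ∪ A = univ := by rw [← hu]; ac_rfl
      have hAc : Aᶜ = B ∪ C := hcmp B C A dBC dAC.symm dAB.symm hu'
      have hBC : B ∪ C ∈ D₁ := hAc ▸ hD₁.2.1 A pA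
      have heb := hEb B ⟨mB, nB⟩ C ⟨mC, nC⟩ dBC hBC
      rcases key B hB with ⟨aB, vB⟩ | ⟨aB, vB⟩ <;>
        rcases key C hC with ⟨aC, vC⟩ | ⟨aC, vC⟩
      · exact absurd aC (heb.mp aB)
      · omega
      · omega
      · exact absurd (heb.mpr aC) aB
    · exact absurd (contra2 A B C hA hB hC dAB dAC dBC hu mA mB mC) (by tauto)
    · have hu' : A ∪ C ∪ B = univ := by rw [← hu]; ac_rfl
      exact absurd (contra2 A C B hA hC hB dAC dAB dBC.symm hu' mA mC mB) (by tauto)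
    · -- both outside D₂
      have hsum : s₂ A + s₂ B + s₂ C - χ = 1 := s2b.2.1
        (Or.inl ⟨dA, fun h => mB ((hD₂s B hB).mpr h), fun h => mC ((hD₂s C hC).mpr h)⟩)
      have nBE : B ∉ E := fun h => mB (hE h).1
      have nCE : C ∉ E := fun h => mC (hE h).1
      rcases key B hB with ⟨a, _⟩ | ⟨_, vB⟩
      · exact absurd a nBE
      rcases key C hC with ⟨a, _⟩ | ⟨_, vC⟩
      · exact absurd a nCE
      omega
  refine ⟨⟨?_, ?_, ?_⟩, fun Y hB => dgiff Y hB, ?_⟩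
  · -- cond1
    intro Y hB
    rcases degensum Y hB with ⟨_, h⟩ | ⟨_, h⟩
    · exact Or.inl h
    · exact Or.inr h
  · -- cond2a
    intro Y₁ Y₂ Y₃ hB₁ hB₂ hB₃ h12 h13 h23 huniv d1 d2
    have m1 : Y₁ ∈ D₁ := (dgiff Y₁ hB₁).mp d1
    have m2 : Y₂ ∈ D₁ := (dgiff Y₂ hB₂).mp d2
    have hYe : Y₃ᶜ = Y₁ ∪ Y₂ := hcmp Y₁ Y₂ Y₃ h12 h23 h13 huniv
    have hBu : BCon conn (Y₁ ∪ Y₂) := by rw [← hYe]; exact hBc Y₃ hB₃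
    have hU : Y₁ ∪ Y₂ ∈ D₁ := hD₁.2.2 Y₁ m1 Y₂ m2 h12 hBu
    have h3 : Y₃ ∈ D₁ := by
      have := hD₁.2.1 _ hU
      rwa [← hYe, compl_compl] at this
    exact (dgiff Y₃ hB₃).mpr h3
  · -- cond2b
    intro Y₁ Y₂ Y₃ hB₁ hB₂ hB₃ h12 h13 h23 huniv
    refine ⟨?_, ?_, ?_⟩
    · rw [dgiff Y₁ hB₁, dgiff Y₂ hB₂, dgiff Y₃ hB₃]
      rintro ⟨n1, n2, n3⟩
      by_cases m1 : Y₁ ∈ D₂ <;> by_cases m2 : Y₂ ∈ D₂ <;> by_cases m3 : Y₃ ∈ D₂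
      · -- all in D₂ \ D₁
        have s2b := hs₂.cond2b Y₁ Y₂ Y₃ hB₁ hB₂ hB₃ h12 h13 h23 huniv
        have hsum : s₂ Y₁ + s₂ Y₂ + s₂ Y₃ - χ = 0 := s2b.2.2
          ⟨(hD₂s Y₁ hB₁).mp m1, (hD₂s Y₂ hB₂).mp m2, (hD₂s Y₃ hB₃).mp m3⟩
        obtain ⟨hor, hnand⟩ := hEc Y₁ ⟨m1, n1⟩ Y₂ ⟨m2, n2⟩ Y₃ ⟨m3, n3⟩ h12 h13 h23 huniv
        rcases key Y₁ hB₁ with ⟨a1, v1⟩ | ⟨a1, v1⟩ <;>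
          rcases key Y₂ hB₂ with ⟨a2, v2⟩ | ⟨a2, v2⟩ <;>
          rcases key Y₃ hB₃ with ⟨a3, v3⟩ | ⟨a3, v3⟩ <;>
          first
            | omega
            | (exfalso; tauto)
      · exact absurd (contra2 Y₁ Y₂ Y₃ hB₁ hB₂ hB₃ h12 h13 h23 huniv m1 m2 m3) (by tauto)
      · exact absurd (contra2 Y₁ Y₃ Y₂ hB₁ hB₃ hB₂ h13 h12 h23.symm
          (by rw [← huniv]; ac_rfl) m1 m3 m2) (by tauto)
      · exact aux1 Y₁ Y₂ Y₃ hB₁ hB₂ hB₃ h12 h13 h23 huniv m1 n1 m2 m3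
      · exact absurd (contra2 Y₂ Y₃ Y₁ hB₂ hB₃ hB₁ h23 h12.symm h13.symm
          (by rw [← huniv]; ac_rfl) m2 m3 m1) (by tauto)
      · have := aux1 Y₂ Y₁ Y₃ hB₂ hB₁ hB₃ h12.symm h23 h13
          (by rw [← huniv]; ac_rfl) m2 n2 m1 m3
        omega
      · have := aux1 Y₃ Y₁ Y₂ hB₃ hB₁ hB₂ h13.symm h23.symm h12
          (by rw [← huniv]; ac_rfl) m3 n3 m1 m2
        omega
      · have s2b := hs₂.cond2b Y₁ Y₂ Y₃ hB₁ hB₂ hB₃ h12 h13 h23 huniv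
        have hsum := s2b.1 ⟨fun h => m1 ((hD₂s Y₁ hB₁).mpr h),
          fun h => m2 ((hD₂s Y₂ hB₂).mpr h), fun h => m3 ((hD₂s Y₃ hB₃).mpr h)⟩
        have e1 : Y₁ ∉ E := fun h => m1 (hE h).1
        have e2 : Y₂ ∉ E := fun h => m2 (hE h).1
        have e3 : Y₃ ∉ E := fun h => m3 (hE h).1
        rcases key Y₁ hB₁ with ⟨a, _⟩ | ⟨_, v1⟩
        · exact absurd a e1
        rcases key Y₂ hB₂ with ⟨a, _⟩ | ⟨_, v2⟩
        · exact absurd a e2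
        rcases key Y₃ hB₃ with ⟨a, _⟩ | ⟨_, v3⟩
        · exact absurd a e3
        rcases hsum with h | h <;> omega
    · rw [dgiff Y₁ hB₁, dgiff Y₂ hB₂, dgiff Y₃ hB₃]
      rintro (⟨p1, n2, n3⟩ | ⟨n1, p2, n3⟩ | ⟨n1, n2, p3⟩)
      · exact aux2 Y₁ Y₂ Y₃ hB₁ hB₂ hB₃ h12 h13 h23 huniv p1 n2 n3
      · have := aux2 Y₂ Y₁ Y₃ hB₂ hB₁ hB₃ h12.symm h23 h13
          (by rw [← huniv]; ac_rfl) p2 n1 n3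
        omega
      · have := aux2 Y₃ Y₁ Y₂ hB₃ hB₁ hB₂ h13.symm h23.symm h12
          (by rw [← huniv]; ac_rfl) p3 n1 n2
        omega
    · rw [dgiff Y₁ hB₁, dgiff Y₂ hB₂, dgiff Y₃ hB₃]
      rintro ⟨p1, p2, p3⟩
      have s2b := hs₂.cond2b Y₁ Y₂ Y₃ hB₁ hB₂ hB₃ h12 h13 h23 huniv
      have hsum : s₂ Y₁ + s₂ Y₂ + s₂ Y₃ - χ = 0 := s2b.2.2
        ⟨(hD₂s Y₁ hB₁).mp (hsub p1), (hD₂s Y₂ hB₂).mp (hsub p2),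
         (hD₂s Y₃ hB₃).mp (hsub p3)⟩
      rcases key Y₁ hB₁ with ⟨a, _⟩ | ⟨_, v1⟩
      · exact absurd p1 (hE a).2
      rcases key Y₂ hB₂ with ⟨a, _⟩ | ⟨_, v2⟩
      · exact absurd p2 (hE a).2
      rcases key Y₃ hB₃ with ⟨a, _⟩ | ⟨_, v3⟩
      · exact absurd p3 (hE a).2
      omega
  · intro Y hB
    rcases key Y hB with ⟨_, v⟩ | ⟨_, v⟩ <;> omega
end
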